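/- Let (P,O) be a T-labelled poset, let Q and R be finite convex subsets of P, let ω be a (Q,O)-tableau and σ an (R,O)-tableau. Then there exists a unique smallest transferrable subset S◇ ⊆ S* for (ω,σ); that is, S◇ is transferrable and S◇ ⊆ S for every transferrable subset S ⊆ S*. -/
import Mathlib


variable {P : Type*} [PartialOrder P]

/-- `s < Q`: `s ∉ Q` and `s < t` for some `t ∈ Q`. -/
def ltSet (s : P) (Q : Set P) : Prop := s ∉ Q ∧ ∃ t ∈ Q, s < t

/-- `s > Q`: `s ∉ Q` and `t < s` for some `t ∈ Q`. -/
def gtSet (s : P) (Q : Set P) : Prop := s ∉ Q ∧ ∃ t ∈ Q, t < s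

/-- `s ∼ Q`: `s ∈ Q` or `s` is incomparable with every element of `Q`. -/
def simSet (s : P) (Q : Set P) : Prop := s ∈ Q ∨ ∀ t ∈ Q, ¬ s ≤ t ∧ ¬ t ≤ s

/-- A convex subset of a poset: closed under taking intervals. -/
def IsConvex (Q : Set P) : Prop := ∀ ⦃s r t : P⦄, s ∈ Q → t ∈ Q → s ≤ r → r ≤ t → r ∈ Q

/-- `Q ∧ R = {s ∈ R | s < Q} ∪ {s ∈ Q | s ∼ R or s < R}`. -/
def wedgeSet (Q R : Set P) : Set P :=
  {s | s ∈ R ∧ ltSet s Q} ∪ {s | s ∈ Q ∧ (simSet s R ∨ ltSet s R)}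

/-- `Q ∨ R = {s ∈ Q | s > R} ∪ {s ∈ R | s ∼ Q or s > Q}`. -/
def veeSet (Q R : Set P) : Set P :=
  {s | s ∈ Q ∧ gtSet s R} ∪ {s | s ∈ R ∧ (simSet s Q ∨ gtSet s Q)}

attribute [local instance] Classical.propDecidable

/-- Embedding of the positive integers `ℙ` (modelled as `ℕ+`) into `ℤ ∪ {∞}`. -/
def toWT (n : ℕ+) : WithTop ℤ := (((n : ℕ) : ℤ) : WithTop ℤ)

/-- `ω : P → ℙ` respects the `𝕋`-labelling `O` on a (convex) subset `Q`:
for every covering relation `s ⋖ t` inside `Q` we have `ω(s) ≤ O(s,t)(ω(t))`.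
(For a convex subposet, covering relations coincide with those of `P`.) -/
def IsTableau (O : P → P → ℕ+ → WithTop ℤ) (Q : Set P) (ω : P → ℕ+) : Prop :=
  ∀ ⦃s t : P⦄, s ∈ Q → t ∈ Q → s ⋖ t → toWT (ω s) ≤ O s t (ω t)

/-- The weight of a tableau on `Q`: `wt(ω)(n) = #ω⁻¹(n)`. -/
noncomputable def wtOn (Q : Set P) (ω : P → ℕ+) (n : ℕ+) : ℕ :=
  Nat.card {x : Q // ω x = n}

/-- `(ω ∧ σ)_S`: equals `σ` on `(R \ Q) ∪ S` and `ω` elsewhere (relevant on `Q ∧ R`). -/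
noncomputable def wedgeTab (Q R S : Set P) (ω σ : P → ℕ+) : P → ℕ+ :=
  fun x => if x ∈ (R \ Q) ∪ S then σ x else ω x

/-- `(ω ∨ σ)_S`: equals `ω` on `(Q \ R) ∪ S` and `σ` elsewhere (relevant on `Q ∨ R`). -/
noncomputable def veeTab (Q R S : Set P) (ω σ : P → ℕ+) : P → ℕ+ :=
  fun x => if x ∈ (Q \ R) ∪ S then ω x else σ x

/-- `(Q ∩ R)⁺ = {x ∈ Q ∩ R | ω(x) < σ(x)}`. -/
def plusSet (Q R : Set P) (ω σ : P → ℕ+) : Set P := {x | x ∈ Q ∩ R ∧ ω x < σ x}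

/-- Adjacency in the graph induced on `A` from the Hasse diagram of `P`. -/
def hasseAdj (A : Set P) (x y : P) : Prop := x ∈ A ∧ y ∈ A ∧ (x ⋖ y ∨ y ⋖ x)

/-- `bd(R) = {x ∈ Q ∩ R | x ⋗ y for some y ∈ R \ Q}`, the lower boundary. -/
def bdLower (Q R : Set P) : Set P := {x | x ∈ Q ∩ R ∧ ∃ y ∈ R \ Q, y ⋖ x}

/-- `bd(Q) = {x ∈ Q ∩ R | x ⋖ y for some y ∈ Q \ R}`, the upper boundary. -/
def bdUpper (Q R : Set P) : Set P := {x | x ∈ Q ∩ R ∧ ∃ y ∈ Q \ R, x ⋖ y}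

/-- The union of the connected components of `(Q ∩ R)⁺` meeting `B`. -/
def bdPlus (Q R : Set P) (ω σ : P → ℕ+) (B : Set P) : Set P :=
  {x | x ∈ plusSet Q R ω σ ∧
    ∃ y ∈ B, Relation.ReflTransGen (hasseAdj (plusSet Q R ω σ)) x y}

/-- `S* = bd(Q)⁺ ∪ bd(R)⁺`. -/
def sStar (Q R : Set P) (ω σ : P → ℕ+) : Set P :=
  bdPlus Q R ω σ (bdUpper Q R) ∪ bdPlus Q R ω σ (bdLower Q R)

/-- `S ⊆ S*` is transferrable for `(ω,σ)` if both `(ω ∧ σ)_S` and `(ω ∨ σ)_S` respect `O`. -/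
def Transferrable (O : P → P → ℕ+ → WithTop ℤ) (Q R : Set P) (ω σ : P → ℕ+)
    (S : Set P) : Prop :=
  S ⊆ sStar Q R ω σ ∧ IsTableau O (wedgeSet Q R) (wedgeTab Q R S ω σ) ∧
    IsTableau O (veeSet Q R) (veeTab Q R S ω σ)

lemma toWT_mono' {a b : ℕ+} (h : a ≤ b) : toWT a ≤ toWT b := by
  unfold toWT; exact_mod_cast h

lemma sStar_sub_plus (Q R : Set P) (ω σ : P → ℕ+) :
    sStar Q R ω σ ⊆ plusSet Q R ω σ :=
  fun _ hx => hx.elim And.left And.left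

lemma sStar_adj {Q R : Set P} {ω σ : P → ℕ+} {x y : P} (hx : x ∈ sStar Q R ω σ)
    (hy : y ∈ plusSet Q R ω σ) (hadj : x ⋖ y ∨ y ⋖ x) : y ∈ sStar Q R ω σ := by
  have hxp := sStar_sub_plus Q R ω σ hx
  have h : hasseAdj (plusSet Q R ω σ) y x := ⟨hy, hxp, hadj.symm⟩
  rcases hx with ⟨_, b, hb, rtg⟩ | ⟨_, b, hb, rtg⟩
  · exact Or.inl ⟨hy, b, hb, rtg.head h⟩
  · exact Or.inr ⟨hy, b, hb, rtg.head h⟩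

lemma wedge_not_RdQ {Q R : Set P} {s : P} (hs : s ∈ wedgeSet Q R) (h : s ∉ R \ Q) :
    s ∈ Q := by
  rcases hs with h1 | h2
  · exact absurd ⟨h1.1, h1.2.1⟩ h
  · exact h2.1

lemma wedge_up_R {Q R : Set P} (hR : IsConvex R) {s t : P} (hs : s ∈ R)
    (ht : t ∈ wedgeSet Q R) (hst : s < t) : t ∈ R := by
  rcases ht with h1 | h2
  · exact h1.1
  · rcases h2.2 with (h | h) | hlt
    · exact h
    · exact absurd hst.le (h s hs).2
    · rcases hlt with ⟨htR, u, hu, htu⟩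
      exact absurd (hR hs hu hst.le htu.le) htR

lemma wedge_no_RdQ_above {Q R : Set P} (hQ : IsConvex Q) {s t : P} (hsQ : s ∈ Q)
    (ht : t ∈ wedgeSet Q R) (hst : s < t) (htRQ : t ∈ R \ Q) : False := by
  rcases ht with h1 | h2
  · rcases h1.2 with ⟨htQ, u, hu, htu⟩
    exact htQ (hQ hsQ hu hst.le htu.le)
  · exact htRQ.2 h2.1

lemma vee_not_QdR {Q R : Set P} {s : P} (hs : s ∈ veeSet Q R) (h : s ∉ Q \ R) :
    s ∈ R := by
  rcases hs with h1 | h2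
  · exact absurd ⟨h1.1, h1.2.1⟩ h
  · exact h2.1

lemma vee_down_Q {Q R : Set P} (hQ : IsConvex Q) {s t : P} (hs : s ∈ veeSet Q R)
    (htQ : t ∈ Q) (hst : s < t) : s ∈ Q := by
  rcases hs with h1 | h2
  · exact h1.1
  · rcases h2.2 with (h | h) | hgt
    · exact h
    · exact absurd hst.le (h t htQ).1
    · rcases hgt with ⟨_, u, hu, hus⟩
      exact hQ hu htQ hus.le hst.le

lemma vee_no_QdR_below {Q R : Set P} (hR : IsConvex R) {s t : P} (hs : s ∈ veeSet Q R)
    (htR : t ∈ R) (hst : s < t) (hsQR : s ∈ Q \ R) : False := by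
  rcases hs with h1 | h2
  · rcases h1.2 with ⟨hsR, u, hu, hus⟩
    exact hsR (hR hu htR hus.le hst.le)
  · exact hsQR.2 h2.1

lemma sStar_transferrable (O : P → P → ℕ+ → WithTop ℤ)
    (hO : ∀ s t : P, s ⋖ t → Monotone (O s t))
    {Q R : Set P} (hQ : IsConvex Q) (hR : IsConvex R)
    {ω σ : P → ℕ+} (hω : IsTableau O Q ω) (hσ : IsTableau O R σ) :
    Transferrable O Q R ω σ (sStar Q R ω σ) := by
  refine ⟨subset_rfl, ?_, ?_⟩
  · intro s t hs ht hcov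
    unfold wedgeTab
    by_cases hsm : s ∈ (R \ Q) ∪ sStar Q R ω σ <;>
      by_cases htm : t ∈ (R \ Q) ∪ sStar Q R ω σ
    · rw [if_pos hsm, if_pos htm]
      have hsR : s ∈ R := hsm.elim And.left (fun h => ((sStar_sub_plus Q R ω σ) h).1.2)
      have htR : t ∈ R := htm.elim And.left (fun h => ((sStar_sub_plus Q R ω σ) h).1.2)
      exact hσ hsR htR hcov
    · rw [if_pos hsm, if_neg htm]
      have htQ : t ∈ Q := wedge_not_RdQ ht (fun h => htm (Or.inl h))
      have hsR : s ∈ R := hsm.elim And.left (fun h => ((sStar_sub_plus Q R ω σ) h).1.2)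
      have htR : t ∈ R := wedge_up_R hR hsR ht hcov.lt
      have htnp : t ∉ plusSet Q R ω σ := by
        intro hp
        rcases hsm with hsRQ | hsS
        · exact htm (Or.inr (Or.inr ⟨hp, t, ⟨⟨htQ, htR⟩, s, hsRQ, hcov⟩,
            Relation.ReflTransGen.refl⟩))
        · exact htm (Or.inr (sStar_adj hsS hp (Or.inl hcov)))
      have hle : σ t ≤ ω t := le_of_not_gt (fun h => htnp ⟨⟨htQ, htR⟩, h⟩)
      exact le_trans (hσ hsR htR hcov) (hO s t hcov hle)
    · rw [if_neg hsm, if_pos htm]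
      have hsQ : s ∈ Q := wedge_not_RdQ hs (fun h => hsm (Or.inl h))
      rcases htm with htRQ | htS
      · exact (wedge_no_RdQ_above hQ hsQ ht hcov.lt htRQ).elim
      · have htp := sStar_sub_plus Q R ω σ htS
        exact le_trans (hω hsQ htp.1.1 hcov) (hO s t hcov htp.2.le)
    · rw [if_neg hsm, if_neg htm]
      exact hω (wedge_not_RdQ hs (fun h => hsm (Or.inl h)))
        (wedge_not_RdQ ht (fun h => htm (Or.inl h))) hcov
  · intro s t hs ht hcov
    unfold veeTab
    by_cases hsm : s ∈ (Q \ R) ∪ sStar Q R ω σ <;>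
      by_cases htm : t ∈ (Q \ R) ∪ sStar Q R ω σ
    · rw [if_pos hsm, if_pos htm]
      have hsQ : s ∈ Q := hsm.elim And.left (fun h => ((sStar_sub_plus Q R ω σ) h).1.1)
      have htQ : t ∈ Q := htm.elim And.left (fun h => ((sStar_sub_plus Q R ω σ) h).1.1)
      exact hω hsQ htQ hcov
    · rw [if_pos hsm, if_neg htm]
      have htR : t ∈ R := vee_not_QdR ht (fun h => htm (Or.inl h))
      rcases hsm with hsQR | hsS
      · exact (vee_no_QdR_below hR hs htR hcov.lt hsQR).elim
      · have hsp := sStar_sub_plus Q R ω σ hsS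
        exact le_trans (toWT_mono' hsp.2.le) (hσ hsp.1.2 htR hcov)
    · rw [if_neg hsm, if_pos htm]
      have hsR : s ∈ R := vee_not_QdR hs (fun h => hsm (Or.inl h))
      have htQ : t ∈ Q := htm.elim And.left (fun h => ((sStar_sub_plus Q R ω σ) h).1.1)
      have hsQ : s ∈ Q := vee_down_Q hQ hs htQ hcov.lt
      have hsnp : s ∉ plusSet Q R ω σ := by
        intro hp
        rcases htm with htQR | htS
        · exact hsm (Or.inr (Or.inl ⟨hp, s, ⟨⟨hsQ, hsR⟩, t, htQR, hcov⟩,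
            Relation.ReflTransGen.refl⟩))
        · exact hsm (Or.inr (sStar_adj htS hp (Or.inr hcov)))
      have hle : σ s ≤ ω s := le_of_not_gt (fun h => hsnp ⟨⟨hsQ, hsR⟩, h⟩)
      exact le_trans (toWT_mono' hle) (hω hsQ htQ hcov)
    · rw [if_neg hsm, if_neg htm]
      exact hσ (vee_not_QdR hs (fun h => hsm (Or.inl h)))
        (vee_not_QdR ht (fun h => htm (Or.inl h))) hcov

lemma sInter_transferrable (O : P → P → ℕ+ → WithTop ℤ)
    (hO : ∀ s t : P, s ⋖ t → Monotone (O s t))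
    {Q R : Set P} {ω σ : P → ℕ+}
    {S₁ : Set P} (hS₁ : Transferrable O Q R ω σ S₁) :
    Transferrable O Q R ω σ (⋂₀ {S | Transferrable O Q R ω σ S}) := by
  set T : Set (Set P) := {S | Transferrable O Q R ω σ S} with hT
  refine ⟨(Set.sInter_subset_of_mem hS₁).trans hS₁.1, ?_, ?_⟩
  · intro s t hs ht hcov
    have claim1 : ∃ S ∈ T, wedgeTab Q R (⋂₀ T) ω σ t = wedgeTab Q R S ω σ t := by
      by_cases htm : t ∈ (R \ Q) ∪ ⋂₀ T
      · refine ⟨S₁, hS₁, ?_⟩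
        have : t ∈ (R \ Q) ∪ S₁ :=
          htm.elim Or.inl (fun h => Or.inr ((Set.sInter_subset_of_mem hS₁) h))
        unfold wedgeTab; rw [if_pos htm, if_pos this]
      · have htm1 : t ∉ R \ Q := fun h => htm (Or.inl h)
        have htm2 : t ∉ ⋂₀ T := fun h => htm (Or.inr h)
        obtain ⟨S, hS, htS⟩ : ∃ S ∈ T, t ∉ S := by
          by_contra hc; push_neg at hc
          exact htm2 (Set.mem_sInter.mpr hc)
        refine ⟨S, hS, ?_⟩
        have h2 : t ∉ (R \ Q) ∪ S := fun h => h.elim htm1 htS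
        unfold wedgeTab
        rw [if_neg htm, if_neg h2]
    have claim2 : ∀ S ∈ T, wedgeTab Q R (⋂₀ T) ω σ s ≤ wedgeTab Q R S ω σ s := by
      intro S hS
      unfold wedgeTab
      by_cases hsm : s ∈ (R \ Q) ∪ ⋂₀ T
      · have : s ∈ (R \ Q) ∪ S :=
          hsm.elim Or.inl (fun h => Or.inr ((Set.sInter_subset_of_mem hS) h))
        rw [if_pos hsm, if_pos this]
      · rw [if_neg hsm]
        by_cases hsS : s ∈ (R \ Q) ∪ S
        · rw [if_pos hsS]
          have hsp : s ∈ plusSet Q R ω σ := by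
            rcases hsS with h | h
            · exact absurd (Or.inl h) hsm
            · exact sStar_sub_plus Q R ω σ (hS.1 h)
          exact hsp.2.le
        · rw [if_neg hsS]
    obtain ⟨S, hS, hteq⟩ := claim1
    rw [hteq]
    exact le_trans (toWT_mono' (claim2 S hS)) (hS.2.1 hs ht hcov)
  · intro s t hs ht hcov
    have claim1 : ∃ S ∈ T, veeTab Q R (⋂₀ T) ω σ s = veeTab Q R S ω σ s := by
      by_cases hsm : s ∈ (Q \ R) ∪ ⋂₀ T
      · refine ⟨S₁, hS₁, ?_⟩
        have : s ∈ (Q \ R) ∪ S₁ :=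
          hsm.elim Or.inl (fun h => Or.inr ((Set.sInter_subset_of_mem hS₁) h))
        unfold veeTab; rw [if_pos hsm, if_pos this]
      · have hsm1 : s ∉ Q \ R := fun h => hsm (Or.inl h)
        have hsm2 : s ∉ ⋂₀ T := fun h => hsm (Or.inr h)
        obtain ⟨S, hS, hsS⟩ : ∃ S ∈ T, s ∉ S := by
          by_contra hc; push_neg at hc
          exact hsm2 (Set.mem_sInter.mpr hc)
        refine ⟨S, hS, ?_⟩
        have h2 : s ∉ (Q \ R) ∪ S := fun h => h.elim hsm1 hsS
        unfold veeTab
        rw [if_neg hsm, if_neg h2]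
    have claim2 : ∀ S ∈ T, veeTab Q R S ω σ t ≤ veeTab Q R (⋂₀ T) ω σ t := by
      intro S hS
      unfold veeTab
      by_cases htm : t ∈ (Q \ R) ∪ ⋂₀ T
      · have : t ∈ (Q \ R) ∪ S :=
          htm.elim Or.inl (fun h => Or.inr ((Set.sInter_subset_of_mem hS) h))
        rw [if_pos htm, if_pos this]
      · rw [if_neg htm]
        by_cases htS : t ∈ (Q \ R) ∪ S
        · rw [if_pos htS]
          have htp : t ∈ plusSet Q R ω σ := by
            rcases htS with h | h
            · exact absurd (Or.inl h) htm
            · exact sStar_sub_plus Q R ω σ (hS.1 h)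
          exact htp.2.le
        · rw [if_neg htS]
    obtain ⟨S, hS, hseq⟩ := claim1
    rw [hseq]
    exact le_trans (hS.2.2 hs ht hcov) (hO s t hcov (claim2 S hS))

/-- there is a unique smallest transferrable subset `S◇ ⊆ S*`. -/
theorem exists_unique_smallest_transferrable (O : P → P → ℕ+ → WithTop ℤ)
    (hO : ∀ s t : P, s ⋖ t → Monotone (O s t))
    (Q R : Set P) (hQf : Q.Finite) (hRf : R.Finite)
    (hQ : IsConvex Q) (hR : IsConvex R)
    (ω σ : P → ℕ+) (hω : IsTableau O Q ω) (hσ : IsTableau O R σ) :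
    ∃! S₀ : Set P, Transferrable O Q R ω σ S₀ ∧
      ∀ S : Set P, Transferrable O Q R ω σ S → S₀ ⊆ S := by
  have hstar : Transferrable O Q R ω σ (sStar Q R ω σ) :=
    sStar_transferrable O hO hQ hR hω hσ
  have hI : Transferrable O Q R ω σ (⋂₀ {S | Transferrable O Q R ω σ S}) :=
    sInter_transferrable O hO hstar
  refine ⟨⋂₀ {S | Transferrable O Q R ω σ S},
    ⟨hI, fun S hS => Set.sInter_subset_of_mem hS⟩, ?_⟩
  rintro S' ⟨hS', hmin⟩
  exact (Set.subset_sInter (fun S hS => hmin S hS)).antisymm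
    (Set.sInter_subset_of_mem hS')
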